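/- arXiv:2603.25662 — 3 statements merged into one kernel-verified Lean document; each statement's English description precedes it below -/
import Mathlib

section
/- Every Θ-class of a daisy cube is peripheral: for every edge ab of a daisy cube G, either W_ab = U_ab or W_ba = U_ba, where W_ab = {w : d(w,a) < d(w,b)}, and U_ab is the set of vertices of W_ab adjacent to some vertex of W_ba. -/
open SimpleGraph Function

/-- The hypercube graph `Q_n` on binary strings of length `n`. -/
def cubeGraph (n : ℕ) : SimpleGraph (Fin n → Bool) where
  Adj u v := hammingDist u v = 1
  symm := ⟨fun u v h => by simpa [hammingDist_comm] using h⟩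
  loopless := ⟨fun u h => by simp [hammingDist_self] at h⟩

/-- The downward closure of a set of binary strings under the coordinatewise order. -/
def dClosure {n : ℕ} (X : Set (Fin n → Bool)) : Set (Fin n → Bool) :=
  {u | ∃ x ∈ X, u ≤ x}

/-- The daisy cube `Q_n(X)`: the subgraph of `Q_n` induced by the downward closure of `X`. -/
def daisyCube (n : ℕ) (X : Set (Fin n → Bool)) : SimpleGraph (dClosure X) :=
  (cubeGraph n).induce (dClosure X)

/-- The τ-graph of a (coordinatized) partial cube `G ⊆ Q_n`, with Θ-classes identified with the
coordinates: two classes are adjacent iff incident edges, one flipping each coordinate, form a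
convex path on three vertices. -/
def coordTau {n : ℕ} {V : Type*} (val : V → (Fin n → Bool)) (G : SimpleGraph V) :
    SimpleGraph (Fin n) where
  Adj i j := i ≠ j ∧ ∃ u v w : V, G.Adj u v ∧ G.Adj v w ∧
      val u i ≠ val v i ∧ val v j ≠ val w j ∧
      ¬ G.Adj u w ∧ ∀ x : V, G.Adj u x → G.Adj w x → x = v
  symm := by
    constructor
    rintro i j ⟨hij, u, v, w, h1, h2, h3, h4, h5, h6⟩
    exact ⟨hij.symm, w, v, u, h2.symm, h1.symm, fun h => h4 h.symm, fun h => h3 h.symm,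
      fun h => h5 h.symm, fun x hw hu => h6 x hu hw⟩
  loopless := by
    constructor
    rintro i ⟨hij, _⟩
    exact hij rfl

/-- The set `W_ab` of vertices closer to `a` than to `b`. -/
def Wset {V : Type*} (G : SimpleGraph V) (a b : V) : Set V :=
  {w | G.dist w a < G.dist w b}

/-- The set `U_ab` of vertices of `W_ab` adjacent to some vertex of `W_ba`. -/
def Uset {V : Type*} (G : SimpleGraph V) (a b : V) : Set V :=
  {u | u ∈ Wset G a b ∧ ∃ v ∈ Wset G b a, G.Adj u v}

/-! A daisy cube is an isometric subgraph of `Q_n`, so for an edge `ab` flipping coordinate `i`,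
`W_ab` and `W_ba` are the vertices agreeing with `a`, resp. `b`, in coordinate `i`. Say `b i = 1`.
Since the vertex set is down-closed, flipping coordinate `i` of any `w ∈ W_ba` down to `0` gives a
neighbour of `w` in `W_ab`, so `W_ba = U_ba`. -/

section Hamming

variable {ι : Type*} {β : ι → Type*}

def DiffersOnlyAt (a b : ∀ i, β i) (i : ι) : Prop :=
  ∀ j, a j ≠ b j ↔ j = i

theorem DiffersOnlyAt.symm {a b : ∀ i, β i} {i : ι} (h : DiffersOnlyAt a b i) :
    DiffersOnlyAt b a i :=
  fun j => ne_comm.trans (h j)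

theorem DiffersOnlyAt.ne {a b : ∀ i, β i} {i : ι} (h : DiffersOnlyAt a b i) : a i ≠ b i :=
  (h i).mpr rfl

theorem differsOnlyAt_update [DecidableEq ι] (a : ∀ i, β i) {i : ι} {c : β i} (hc : c ≠ a i) :
    DiffersOnlyAt a (update a i c) i := by
  intro j
  by_cases hj : j = i
  · subst hj
    simpa using hc.symm
  · simp [hj]

theorem hammingDist_eq_one_iff [Fintype ι] [∀ i, DecidableEq (β i)] {a b : ∀ i, β i} :
    hammingDist a b = 1 ↔ ∃ i, DiffersOnlyAt a b i := by
  simp [hammingDist, Finset.card_eq_one, Finset.ext_iff, DiffersOnlyAt]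

theorem hammingDist_eq_add_one_of_differsOnlyAt [Fintype ι] [DecidableEq ι]
    [∀ i, DecidableEq (β i)] {a b w : ∀ i, β i} {i : ι} (hab : DiffersOnlyAt a b i)
    (hw : w i = a i) :
    hammingDist w b = hammingDist w a + 1 := by
  have hsupp : (Finset.univ.filter fun j => w j ≠ b j) =
      insert i (Finset.univ.filter fun j => w j ≠ a j) := by
    ext j
    by_cases hj : j = i
    · subst hj
      simpa [hw] using hab.ne
    · simp [hj, not_not.mp (mt (hab j).mp hj)]
  rw [hammingDist, hsupp, Finset.card_insert_of_notMem (by simp [hw]), hammingDist]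

end Hamming

section LowerSet

variable {n : ℕ} {S : Set (Fin n → Bool)}

theorem isLowerSet_dClosure (X : Set (Fin n → Bool)) : IsLowerSet (dClosure X) :=
  fun _ _ hvu ⟨x, hx, hux⟩ => ⟨x, hx, hvu.trans hux⟩

/-- If `u ≤ v` move up towards `v`, otherwise move down at a coordinate where `u i > v i`. -/
theorem IsLowerSet.exists_update_mem (hS : IsLowerSet S) {u v : Fin n → Bool}
    (hu : u ∈ S) (hv : v ∈ S) (huv : u ≠ v) :
    ∃ i, v i ≠ u i ∧ update u i (v i) ∈ S := by
  by_cases hle : u ≤ v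
  · obtain ⟨i, hi⟩ := Function.ne_iff.mp huv
    exact ⟨i, Ne.symm hi, hS (update_le_iff.mpr ⟨le_rfl, fun j _ => hle j⟩) hv⟩
  · obtain ⟨i, hi⟩ := not_forall.mp hle
    refine ⟨i, fun h => hi (h ▸ le_rfl), hS (update_le_self_iff.mpr ?_) hu⟩
    exact le_of_lt (not_le.mp hi)

theorem hammingDist_le_length {u v : Fin n → Bool} (p : (cubeGraph n).Walk u v) :
    hammingDist u v ≤ p.length := by
  induction p with
  | nil => simp
  | @cons u v w hadj _ ih =>
    have hstep : hammingDist u v = 1 := hadj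
    have := hammingDist_triangle u v w
    simp only [Walk.length_cons]
    omega

theorem IsLowerSet.exists_walk_length_le (hS : IsLowerSet S) (u v : S) :
    ∃ p : ((cubeGraph n).induce S).Walk u v, p.length ≤ hammingDist u.1 v.1 := by
  obtain ⟨k, hk⟩ : ∃ k, hammingDist u.1 v.1 = k := ⟨_, rfl⟩
  induction k generalizing u with
  | zero =>
    obtain rfl : u = v := Subtype.ext (hammingDist_eq_zero.mp hk)
    exact ⟨.nil, by simp⟩
  | succ k ih =>
    have huv : u.1 ≠ v.1 := hammingDist_ne_zero.mp (by omega)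
    obtain ⟨i, hi, hmem⟩ := hS.exists_update_mem u.2 v.2 huv
    let w : S := ⟨update u.1 i (v.1 i), hmem⟩
    have hdiff : DiffersOnlyAt u.1 w.1 i := differsOnlyAt_update u.1 hi
    have hadj : ((cubeGraph n).induce S).Adj u w := hammingDist_eq_one_iff.mpr ⟨i, hdiff⟩
    have hcloser : hammingDist v.1 u.1 = hammingDist v.1 w.1 + 1 :=
      hammingDist_eq_add_one_of_differsOnlyAt hdiff.symm (by simp [w])
    rw [hammingDist_comm v.1, hammingDist_comm v.1] at hcloser
    obtain ⟨p, hp⟩ := ih w (by omega)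
    exact ⟨.cons hadj p, by simp only [Walk.length_cons]; omega⟩

theorem IsLowerSet.dist_induce_cubeGraph (hS : IsLowerSet S) (u v : S) :
    ((cubeGraph n).induce S).dist u v = hammingDist u.1 v.1 := by
  obtain ⟨p, hp⟩ := hS.exists_walk_length_le u v
  obtain ⟨q, hq⟩ := p.reachable.exists_walk_length_eq_dist
  refine le_antisymm ((dist_le p).trans hp) ?_
  rw [← hq, ← Walk.length_map (Embedding.induce S).toHom q]
  exact hammingDist_le_length _

theorem IsLowerSet.mem_Wset_induce_cubeGraph_iff (hS : IsLowerSet S) {a b w : S} {i : Fin n}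
    (hab : DiffersOnlyAt a.1 b.1 i) :
    w ∈ Wset ((cubeGraph n).induce S) a b ↔ w.1 i = a.1 i := by
  show ((cubeGraph n).induce S).dist w a < ((cubeGraph n).induce S).dist w b ↔ _
  rw [hS.dist_induce_cubeGraph, hS.dist_induce_cubeGraph]
  by_cases hw : w.1 i = a.1 i
  · simp [hw, hammingDist_eq_add_one_of_differsOnlyAt hab hw]
  · have hwb : w.1 i = b.1 i :=
      (Bool.eq_not_iff.mpr hw).trans (Bool.eq_not_iff.mpr hab.ne.symm).symm
    simp [hw, hammingDist_eq_add_one_of_differsOnlyAt hab.symm hwb]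

theorem IsLowerSet.Wset_eq_Uset_induce_cubeGraph (hS : IsLowerSet S) {a b : S} {i : Fin n}
    (hab : DiffersOnlyAt a.1 b.1 i) (hb : b.1 i = true) :
    Wset ((cubeGraph n).induce S) b a = Uset ((cubeGraph n).induce S) b a := by
  refine Set.Subset.antisymm (fun w hw => ⟨hw, ?_⟩) (fun w hw => hw.1)
  have hwi : w.1 i = true := hb ▸ (hS.mem_Wset_induce_cubeGraph_iff hab.symm).mp hw
  have hdiff := differsOnlyAt_update w.1 (i := i) (c := false) (by simp [hwi])
  have hmem : update w.1 i false ∈ S := hS (update_le_self_iff.mpr (Bool.false_le _)) w.2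
  refine ⟨⟨_, hmem⟩, (hS.mem_Wset_induce_cubeGraph_iff hab).mpr ?_,
    hammingDist_eq_one_iff.mpr ⟨i, hdiff⟩⟩
  simpa [hb] using hab.ne

end LowerSet

/-- Every Θ-class of a daisy cube is peripheral: for every edge `ab` of a daisy
cube `G`, either `W_ab = U_ab` or `W_ba = U_ba`. -/
theorem daisyCube_theta_class_peripheral (n : ℕ) (X : Set (Fin n → Bool))
    (a b : dClosure X) (hab : (daisyCube n X).Adj a b) :
    Wset (daisyCube n X) a b = Uset (daisyCube n X) a b ∨
      Wset (daisyCube n X) b a = Uset (daisyCube n X) b a := by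
  obtain ⟨i, hi⟩ := hammingDist_eq_one_iff.mp hab
  have hS := isLowerSet_dClosure X
  cases hb : b.1 i with
  | true => exact .inr (hS.Wset_eq_Uset_induce_cubeGraph hi hb)
  | false =>
    have ha : a.1 i = true := by simpa [hb] using hi.ne
    exact .inl (hS.Wset_eq_Uset_induce_cubeGraph hi.symm ha)
end

section
/- The τ-graph of the Fibonacci cube Γ_n is the path P_n on n vertices, for every n ≥ 1. -/
open SimpleGraph Function

/-- Binary strings of length `n` with no two consecutive 1's. -/
def fibSet (n : ℕ) : Set (Fin n → Bool) :=
  {u | ∀ i j : Fin n, (j : ℕ) = (i : ℕ) + 1 → ¬(u i = true ∧ u j = true)}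

/-- The Fibonacci cube `Γ_n`. -/
def fibCube (n : ℕ) : SimpleGraph (fibSet n) :=
  (cubeGraph n).induce (fibSet n)

/-!
Θ-classes `i ≠ j` of an induced subgraph `G` of the hypercube are τ-adjacent iff some vertex `v`
of `G` has both neighbours `v^i`, `v^j` in `G` while the fourth corner `v^{ij}` of their square is
missing: in the cube the only common neighbours of `v^i` and `v^j` are `v` and `v^{ij}`.
In `Γ_n`, if `i` and `j` are not consecutive then every pair of consecutive positions avoids `i`
or `j`, so `v^{ij}` inherits the Fibonacci property from `v^j` or `v^i`; if they are consecutive,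
the corner `0^{ij}` of the square at `v = 0` is missing.
-/

def flipAt {ι : Type*} [DecidableEq ι] (u : ι → Bool) (i : ι) : ι → Bool :=
  update u i (!u i)

section flipAt

variable {ι : Type*} [DecidableEq ι] {u v : ι → Bool} {i j k : ι}

theorem flipAt_apply : flipAt u i k = if k = i then !u i else u k :=
  update_apply ..

@[simp]
theorem flipAt_apply_self : flipAt u i i = !u i :=
  update_self ..

theorem flipAt_apply_of_ne (h : k ≠ i) : flipAt u i k = u k :=
  update_of_ne h ..

@[simp]
theorem flipAt_flipAt_self : flipAt (flipAt u i) i = u := by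
  funext k
  by_cases h : k = i
  · subst h; simp
  · simp [flipAt_apply_of_ne h]

theorem flipAt_comm : flipAt (flipAt u i) j = flipAt (flipAt u j) i := by
  funext k
  by_cases hi : k = i <;> by_cases hj : k = j <;> simp_all [flipAt_apply]

theorem eq_flipAt_iff : v = flipAt u i ↔ ∀ k, u k ≠ v k ↔ k = i := by
  refine funext_iff.trans (forall_congr' fun k => ?_)
  by_cases h : k = i
  · subst h; rw [flipAt_apply_self]; cases u k <;> cases v k <;> simp
  · simp [flipAt_apply_of_ne h, h, eq_comm]

theorem flipAt_flipAt_ne_self (hij : i ≠ j) : flipAt (flipAt u i) j ≠ u := fun h => by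
  simpa [flipAt_apply_of_ne hij] using congrFun h i

end flipAt

section cubeGraph

variable {n : ℕ} {u v x : Fin n → Bool} {i j : Fin n}

theorem cubeGraph_adj_iff : (cubeGraph n).Adj u v ↔ ∃ i, v = flipAt u i := by
  simp only [eq_flipAt_iff]
  show hammingDist u v = 1 ↔ _
  simp [hammingDist, Finset.card_eq_one, Finset.ext_iff]

theorem cubeGraph_adj_flipAt : (cubeGraph n).Adj u (flipAt u i) :=
  cubeGraph_adj_iff.2 ⟨i, rfl⟩

theorem eq_flipAt_of_cubeGraph_adj (h : (cubeGraph n).Adj u v) (hi : u i ≠ v i) :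
    v = flipAt u i := by
  obtain ⟨a, rfl⟩ := cubeGraph_adj_iff.1 h
  obtain rfl : i = a := (eq_flipAt_iff.1 rfl i).1 hi
  rfl

theorem not_cubeGraph_adj_flipAt_flipAt (hij : i ≠ j) :
    ¬ (cubeGraph n).Adj (flipAt u i) (flipAt u j) := fun h => by
  obtain ⟨a, ha⟩ := cubeGraph_adj_iff.1 h
  have hi : i = a := (eq_flipAt_iff.1 ha i).1 (by simp [flipAt_apply_of_ne hij])
  have hj : j = a := (eq_flipAt_iff.1 ha j).1 (by simp [flipAt_apply_of_ne hij.symm])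
  exact hij (hi.trans hj.symm)

theorem eq_or_eq_flipAt_flipAt_of_cubeGraph_adj (hij : i ≠ j)
    (hi : (cubeGraph n).Adj (flipAt u i) x) (hj : (cubeGraph n).Adj (flipAt u j) x) :
    x = u ∨ x = flipAt (flipAt u i) j := by
  obtain ⟨a, rfl⟩ := cubeGraph_adj_iff.1 hi
  obtain ⟨b, hb⟩ := cubeGraph_adj_iff.1 hj
  by_cases hai : a = i
  · subst hai; simp
  · right
    have hbi : i = b := (eq_flipAt_iff.1 hb i).1 <| by
      simp [flipAt_apply_of_ne hij, flipAt_apply_of_ne (Ne.symm hai)]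
    rw [hb, ← hbi, flipAt_comm]

theorem coordTau_induce_cubeGraph_adj_iff {S : Set (Fin n → Bool)} :
    (coordTau Subtype.val ((cubeGraph n).induce S)).Adj i j ↔
      i ≠ j ∧ ∃ v ∈ S, flipAt v i ∈ S ∧ flipAt v j ∈ S ∧ flipAt (flipAt v i) j ∉ S := by
  constructor
  · rintro ⟨hij, ⟨u, hu⟩, ⟨v, hv⟩, ⟨w, hw⟩, huv, hvw, hi, hj, -, hunique⟩
    obtain rfl : u = flipAt v i := eq_flipAt_of_cubeGraph_adj huv.symm (Ne.symm hi)
    obtain rfl : w = flipAt v j := eq_flipAt_of_cubeGraph_adj hvw hj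
    refine ⟨hij, v, hv, hu, hw, fun hvij => flipAt_flipAt_ne_self (u := v) hij ?_⟩
    have hw_adj : (cubeGraph n).Adj (flipAt v j) (flipAt (flipAt v i) j) := by
      rw [flipAt_comm]; exact cubeGraph_adj_flipAt
    exact congrArg Subtype.val (hunique ⟨_, hvij⟩ cubeGraph_adj_flipAt hw_adj)
  · rintro ⟨hij, v, hv, hvi, hvj, hvij⟩
    refine ⟨hij, ⟨_, hvi⟩, ⟨v, hv⟩, ⟨_, hvj⟩, cubeGraph_adj_flipAt.symm, cubeGraph_adj_flipAt,
      by simp, by simp, not_cubeGraph_adj_flipAt_flipAt hij, ?_⟩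
    rintro ⟨x, hx⟩ hix hjx
    rcases eq_or_eq_flipAt_flipAt_of_cubeGraph_adj hij hix hjx with rfl | rfl
    · rfl
    · exact absurd hx hvij

end cubeGraph

section fibCube

variable {n : ℕ} {i j : Fin n}

theorem bot_mem_fibSet : (⊥ : Fin n → Bool) ∈ fibSet n := by
  rintro p q - ⟨hp, -⟩
  simp at hp

theorem flipAt_bot_mem_fibSet (i : Fin n) : flipAt ⊥ i ∈ fibSet n := by
  rintro p q hpq ⟨hp, hq⟩
  simp only [flipAt_apply, Pi.bot_apply, bot_eq_false, Bool.not_false, Bool.if_false_right,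
    Bool.and_true, decide_eq_true_eq] at hp hq
  subst hp hq
  omega

theorem flipAt_flipAt_bot_notMem_fibSet (h : (pathGraph n).Adj i j) :
    flipAt (flipAt ⊥ i) j ∉ fibSet n := fun hmem => by
  have hij := h.ne
  rcases pathGraph_adj.1 h with h | h
  · exact hmem i j h.symm ⟨by simp [flipAt_apply, hij], by simp [flipAt_apply, hij.symm]⟩
  · exact hmem j i h.symm ⟨by simp [flipAt_apply, hij.symm], by simp [flipAt_apply, hij]⟩

theorem flipAt_flipAt_mem_fibSet {v : Fin n → Bool} (hvi : flipAt v i ∈ fibSet n)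
    (hvj : flipAt v j ∈ fibSet n) (hij : i ≠ j) (hpath : ¬ (pathGraph n).Adj i j) :
    flipAt (flipAt v i) j ∈ fibSet n := by
  intro p q hpq hones
  by_cases hj : j ≠ p ∧ j ≠ q
  · rw [flipAt_apply_of_ne hj.1.symm, flipAt_apply_of_ne hj.2.symm] at hones
    exact hvi p q hpq hones
  by_cases hi : i ≠ p ∧ i ≠ q
  · rw [flipAt_comm, flipAt_apply_of_ne hi.1.symm, flipAt_apply_of_ne hi.2.symm] at hones
    exact hvj p q hpq hones
  simp only [not_and_or, ne_eq, not_not, ← Fin.val_inj] at hi hj hij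
  exact hpath (pathGraph_adj.2 (by omega))

theorem coordTau_fibCube_adj_iff :
    (coordTau Subtype.val (fibCube n)).Adj i j ↔ (pathGraph n).Adj i j := by
  rw [fibCube, coordTau_induce_cubeGraph_adj_iff]
  constructor
  · rintro ⟨hij, v, -, hvi, hvj, hvij⟩
    by_contra hpath
    exact hvij (flipAt_flipAt_mem_fibSet hvi hvj hij hpath)
  · intro h
    exact ⟨h.ne, ⊥, bot_mem_fibSet, flipAt_bot_mem_fibSet i, flipAt_bot_mem_fibSet j,
      flipAt_flipAt_bot_notMem_fibSet h⟩

end fibCube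

theorem fibCube_tau_eq_path_general (n : ℕ) :
    Nonempty (coordTau (Subtype.val) (fibCube n) ≃g SimpleGraph.pathGraph n) :=
  ⟨⟨Equiv.refl _, coordTau_fibCube_adj_iff.symm⟩⟩

/-- The τ-graph of the Fibonacci cube `Γ_n` is the path `P_n` on `n` vertices,
for every `n ≥ 1`. -/
theorem fibCube_tau_eq_path (n : ℕ) (hn : 1 ≤ n) :
    Nonempty (coordTau (Subtype.val) (fibCube n) ≃g SimpleGraph.pathGraph n) :=
  fibCube_tau_eq_path_general n
end

section
/- In the Lucas cube Λ_n (n ≥ 3), for any index j with 3 ≤ j ≤ n−1, the Θ-classes X_1 and X_j are not adjacent in the τ-graph: every pair of incident edges, one from X_1 and one from X_j, lies on a common 4-cycle of Λ_n. -/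
open SimpleGraph Function

/-- Binary strings of length `n` with no two cyclically consecutive 1's. -/
def lucasSet (n : ℕ) : Set (Fin n → Bool) :=
  {u | ∀ i j : Fin n, ((i : ℕ) + 1) % n = (j : ℕ) → ¬(u i = true ∧ u j = true)}

/-- The Lucas cube `Λ_n`. -/
def lucasCube (n : ℕ) : SimpleGraph (lucasSet n) :=
  (cubeGraph n).induce (lucasSet n)

/-! If `u – v` flips coordinate `a` and `v – w` flips `b ≠ a`, then `x := update u b (w b)` closes
the 4-cycle `u v w x` of the hypercube. When `a` and `b` are not cyclically consecutive, `x` is a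
Lucas string: every consecutive pair of positions avoids `b`, where `x` agrees with `u`, or avoids
`a`, where `x` agrees with `w`. Coordinates `0` and `j` with `2 ≤ j ≤ n - 2` are such a pair, so
no path with edges in `X_1` and `X_{j+1}` is convex. -/

section Hamming

variable {ι : Type*} [Fintype ι] {β : ι → Type*} [∀ i, DecidableEq (β i)]
  {u v w : ∀ i, β i} {a b : ι}

theorem eq_of_hammingDist_eq_one (h : hammingDist u v = 1) (ha : u a ≠ v a) {k : ι}
    (hk : k ≠ a) : u k = v k := by
  by_contra hne
  exact hk (Finset.card_le_one.1 h.le k (by simpa using hne) a (by simpa using ha))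

theorem hammingDist_eq_one_of_forall_ne_eq (ha : u a ≠ v a) (h : ∀ k, k ≠ a → u k = v k) :
    hammingDist u v = 1 :=
  Finset.card_eq_one.2 ⟨a, Finset.eq_singleton_iff_unique_mem.2
    ⟨by simpa using ha, fun k hk => by_contra fun hka => (Finset.mem_filter.1 hk).2 (h k hka)⟩⟩

theorem hammingDist_square [DecidableEq ι] (hab : a ≠ b) (huv : hammingDist u v = 1)
    (hua : u a ≠ v a) (hvw : hammingDist v w = 1) (hvb : v b ≠ w b) :
    hammingDist w (update u b (w b)) = 1 ∧ hammingDist (update u b (w b)) u = 1 ∧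
      update u b (w b) ≠ v ∧ ∀ k, k ≠ a → update u b (w b) k = w k := by
  have hxa : update u b (w b) a = u a := update_of_ne hab _ _
  have hvu : u b = v b := eq_of_hammingDist_eq_one huv hua hab.symm
  have hxw : ∀ k, k ≠ a → update u b (w b) k = w k := by
    intro k hka
    rcases eq_or_ne k b with rfl | hkb
    · exact update_self ..
    · rw [update_of_ne hkb, eq_of_hammingDist_eq_one huv hua hka,
        eq_of_hammingDist_eq_one hvw hvb hkb]
  refine ⟨hammingDist_eq_one_of_forall_ne_eq ?_ fun k hk => (hxw k hk).symm,
    hammingDist_eq_one_of_forall_ne_eq ?_ fun k hk => update_of_ne hk _ _,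
    fun hxv => hua (hxa ▸ congrFun hxv a), hxw⟩
  · rw [hxa, ← eq_of_hammingDist_eq_one hvw hvb hab]
    exact fun h => hua h.symm
  · rw [update_self, hvu]
    exact fun h => hvb h.symm

end Hamming

theorem coordTau_not_adj_of_forall_square {n : ℕ} {V : Type*} {val : V → Fin n → Bool}
    {G : SimpleGraph V} {i j : Fin n}
    (h : ∀ u v w : V, G.Adj u v → G.Adj v w → val u i ≠ val v i → val v j ≠ val w j →
      ∃ x : V, G.Adj w x ∧ G.Adj x u ∧ x ≠ v) :
    ¬ (coordTau val G).Adj i j := by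
  rintro ⟨-, u, v, w, huv, hvw, hi, hj, -, hunique⟩
  obtain ⟨x, hwx, hxu, hxv⟩ := h u v w huv hvw hi hj
  exact hxv (hunique x hxu.symm hwx)

theorem mem_lucasSet_of_eq_off {n : ℕ} {x u w : Fin n → Bool} {a b : Fin n}
    (hu : u ∈ lucasSet n) (hw : w ∈ lucasSet n) (hab : a ≠ b)
    (hsucc_ab : ((a : ℕ) + 1) % n ≠ b) (hsucc_ba : ((b : ℕ) + 1) % n ≠ a)
    (hxu : ∀ k, k ≠ b → x k = u k) (hxw : ∀ k, k ≠ a → x k = w k) : x ∈ lucasSet n := by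
  intro i j hij
  by_cases hb : i ≠ b ∧ j ≠ b
  · rw [hxu i hb.1, hxu j hb.2]
    exact hu i j hij
  · have ha : i ≠ a ∧ j ≠ a := by
      constructor <;> rintro rfl <;> grind
    rw [hxw i ha.1, hxw j ha.2]
    exact hw i j hij

theorem lucasCube_square {n : ℕ} {a b : Fin n} (hab : a ≠ b)
    (hsucc_ab : ((a : ℕ) + 1) % n ≠ b) (hsucc_ba : ((b : ℕ) + 1) % n ≠ a) :
    ∀ u v w : lucasSet n, (lucasCube n).Adj u v → (lucasCube n).Adj v w →
      u.1 a ≠ v.1 a → v.1 b ≠ w.1 b →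
        ∃ x : lucasSet n, (lucasCube n).Adj w x ∧ (lucasCube n).Adj x u ∧ x ≠ v := by
  intro u v w huv hvw hua hvb
  obtain ⟨hwx, hxu, hxv, hxw⟩ := hammingDist_square hab huv hua hvw hvb
  have hx : update u.1 b (w.1 b) ∈ lucasSet n :=
    mem_lucasSet_of_eq_off u.2 w.2 hab hsucc_ab hsucc_ba (fun k hk => update_of_ne hk _ _) hxw
  exact ⟨⟨_, hx⟩, hwx, hxu, fun h => hxv (congrArg Subtype.val h)⟩

theorem lucasCube_tau_not_adjacent_general (n : ℕ) (i0 j : Fin n)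
    (hi0 : (i0 : ℕ) = 0) (hj1 : 2 ≤ (j : ℕ)) (hj2 : (j : ℕ) ≤ n - 2) :
    (∀ u v w : lucasSet n, (lucasCube n).Adj u v → (lucasCube n).Adj v w →
      u.1 i0 ≠ v.1 i0 → v.1 j ≠ w.1 j →
        ∃ x : lucasSet n, (lucasCube n).Adj w x ∧ (lucasCube n).Adj x u ∧ x ≠ v) ∧
    ¬ (coordTau (Subtype.val) (lucasCube n)).Adj i0 j := by
  have hne : i0 ≠ j := fun h => by rw [← h, hi0] at hj1; omega
  have h0j : ((i0 : ℕ) + 1) % n ≠ j := by rw [hi0, Nat.mod_eq_of_lt (by omega)]; omega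
  have hj0 : ((j : ℕ) + 1) % n ≠ i0 := by rw [hi0, Nat.mod_eq_of_lt (by omega)]; omega
  have hsquare := lucasCube_square hne h0j hj0
  exact ⟨hsquare, coordTau_not_adj_of_forall_square hsquare⟩

/-- In the Lucas cube `Λ_n` (`n ≥ 3`), for any coordinate `j` with
`2 ≤ j ≤ n - 2` (i.e. `X_{j+1}` with `3 ≤ j+1 ≤ n-1` in 1-indexed notation), the Θ-classes
`X_1` (coordinate `0`) and `X_{j+1}` are not adjacent in the τ-graph: every pair of incident
edges, one flipping coordinate `0` and one flipping coordinate `j`, lies on a common 4-cycle. -/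
theorem lucasCube_tau_not_adjacent (n : ℕ) (hn : 3 ≤ n) (i0 j : Fin n)
    (hi0 : (i0 : ℕ) = 0) (hj1 : 2 ≤ (j : ℕ)) (hj2 : (j : ℕ) ≤ n - 2) :
    (∀ u v w : lucasSet n, (lucasCube n).Adj u v → (lucasCube n).Adj v w →
      u.1 i0 ≠ v.1 i0 → v.1 j ≠ w.1 j →
        ∃ x : lucasSet n, (lucasCube n).Adj w x ∧ (lucasCube n).Adj x u ∧ x ≠ v) ∧
    ¬ (coordTau (Subtype.val) (lucasCube n)).Adj i0 j :=
  lucasCube_tau_not_adjacent_general n i0 j hi0 hj1 hj2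
end
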